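/- For all positive integers i, all nonnegative integers k, and all real t: Σ_{j=1}^i (-1)^{j-1} C(i,j) j^k t^j = Σ_{j=0}^k S(k,j) t^j (-1)^{j-1} (i)_j (1-t)^{i-j} + [k=0]·(1-(1-t)^i), where (i)_j := i(i-1)⋯(i-j+1) is the falling factorial and S(k,j) are Stirling numbers of the second kind (with the convention that for k ≥ 1 the j=0 term vanishes since S(k,0)=0). -/

import Mathlib

/-! Expanding `j ^ k = ∑ₘ S(k, m) (j)ₘ` reduces the left-hand side to the sums
`∑ⱼ C(i, j) (j)ₘ xʲ`, which equal `(i)ₘ xᵐ (1 + x) ^ (i - m)` because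
`C(i, j) (j)ₘ = (i)ₘ C(i - m, j - m)`. At `x = -t` the terms `j = 0` and `m = 0` survive only
for `k = 0`, and account for the correction `1 - (1 - t) ^ i`. -/

/-- Stirling numbers of the second kind. -/
def stirlingSecond : ℕ → ℕ → ℕ
  | 0, 0 => 1
  | 0, _ + 1 => 0
  | _ + 1, 0 => 0
  | n + 1, k + 1 => (k + 1) * stirlingSecond n (k + 1) + stirlingSecond n k

theorem stirlingSecond_eq_nat_stirlingSecond : stirlingSecond = Nat.stirlingSecond := by
  funext n k
  induction n generalizing k with
  | zero => cases k <;> rfl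
  | succ n ih => cases k <;> simp [stirlingSecond, Nat.stirlingSecond_succ_succ, ih]

namespace Nat

theorem mul_descFactorial (n m : ℕ) :
    n * n.descFactorial m = n.descFactorial (m + 1) + m * n.descFactorial m := by
  rcases le_or_gt m n with h | h
  · rw [descFactorial_succ, ← add_mul, Nat.sub_add_cancel h]
  · simp [descFactorial_eq_zero_iff_lt.2 h]

theorem pow_eq_sum_stirlingSecond_mul_descFactorial (n k : ℕ) :
    n ^ k = ∑ m ∈ Finset.range (k + 1), Nat.stirlingSecond k m * n.descFactorial m := by
  induction k with
  | zero => simp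
  | succ k ih =>
    have shift : ∑ m ∈ Finset.range (k + 1), m * stirlingSecond k m * n.descFactorial m =
        ∑ m ∈ Finset.range (k + 1),
          (m + 1) * stirlingSecond k (m + 1) * n.descFactorial (m + 1) := by
      rw [Finset.sum_range_succ', Finset.sum_range_succ,
        stirlingSecond_eq_zero_of_lt (Nat.lt_succ_self k)]
      simp
    calc n ^ (k + 1)
        = ∑ m ∈ Finset.range (k + 1), stirlingSecond k m * (n * n.descFactorial m) := by
          rw [pow_succ, ih, Finset.sum_mul]
          exact Finset.sum_congr rfl fun m _ => by ring
      _ = ∑ m ∈ Finset.range (k + 1), stirlingSecond k m * n.descFactorial (m + 1) +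
          ∑ m ∈ Finset.range (k + 1),
            (m + 1) * stirlingSecond k (m + 1) * n.descFactorial (m + 1) := by
          rw [← shift, ← Finset.sum_add_distrib]
          exact Finset.sum_congr rfl fun m _ => by rw [mul_descFactorial]; ring
      _ = _ := by
          rw [Finset.sum_range_succ' _ (k + 1), ← Finset.sum_add_distrib]
          simp only [stirlingSecond_succ_succ, stirlingSecond_succ_zero, zero_mul, add_zero]
          exact Finset.sum_congr rfl fun m _ => by ring

theorem choose_mul_descFactorial {n j m : ℕ} (h : m ≤ j) :
    n.choose j * j.descFactorial m = n.descFactorial m * (n - m).choose (j - m) := by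
  rw [descFactorial_eq_factorial_mul_choose j, descFactorial_eq_factorial_mul_choose n,
    mul_left_comm, choose_mul h, mul_assoc]

end Nat

section
variable {R : Type*} [CommSemiring R]

theorem sum_choose_mul_descFactorial_mul_pow (n m : ℕ) (x : R) :
    ∑ j ∈ Finset.range (n + 1), (n.choose j * j.descFactorial m : R) * x ^ j =
      n.descFactorial m * x ^ m * (1 + x) ^ (n - m) := by
  have vanish : ∀ j < m, (n.choose j * j.descFactorial m : R) * x ^ j = 0 := fun j hj => by
    simp [Nat.descFactorial_eq_zero_iff_lt.2 hj]
  rcases le_or_gt m n with h | h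
  · obtain ⟨l, rfl⟩ := Nat.exists_eq_add_of_le h
    rw [show m + l + 1 = m + (l + 1) by omega, Finset.sum_range_add,
      Finset.sum_eq_zero fun j hj => vanish j (Finset.mem_range.1 hj), zero_add,
      Nat.add_sub_cancel_left, add_comm 1 x, add_pow, Finset.mul_sum]
    refine Finset.sum_congr rfl fun j _ => ?_
    rw [← Nat.cast_mul, Nat.choose_mul_descFactorial (Nat.le_add_right m j),
      Nat.add_sub_cancel_left, Nat.add_sub_cancel_left]
    push_cast
    ring
  · rw [Nat.descFactorial_eq_zero_iff_lt.2 h, Nat.cast_zero, zero_mul, zero_mul]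
    exact Finset.sum_eq_zero fun j hj => vanish j (by simp at hj; omega)

theorem sum_choose_mul_pow_mul_pow (n k : ℕ) (x : R) :
    ∑ j ∈ Finset.range (n + 1), (n.choose j * j ^ k : R) * x ^ j =
      ∑ m ∈ Finset.range (k + 1),
        Nat.stirlingSecond k m * n.descFactorial m * x ^ m * (1 + x) ^ (n - m) := by
  calc ∑ j ∈ Finset.range (n + 1), (n.choose j * j ^ k : R) * x ^ j
      = ∑ j ∈ Finset.range (n + 1), ∑ m ∈ Finset.range (k + 1),
          (Nat.stirlingSecond k m : R) * ((n.choose j * j.descFactorial m : R) * x ^ j) := by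
        refine Finset.sum_congr rfl fun j _ => ?_
        rw [← Nat.cast_pow, Nat.pow_eq_sum_stirlingSecond_mul_descFactorial, Nat.cast_sum,
          Finset.mul_sum, Finset.sum_mul]
        refine Finset.sum_congr rfl fun m _ => ?_
        push_cast
        ring
    _ = _ := by
        rw [Finset.sum_comm]
        refine Finset.sum_congr rfl fun m _ => ?_
        rw [← Finset.mul_sum, sum_choose_mul_descFactorial_mul_pow]
        ring

end

theorem Finset.sum_range_succ_eq_add_sum_Icc_one {M : Type*} [AddCommMonoid M] (f : ℕ → M)
    (n : ℕ) : ∑ j ∈ Finset.range (n + 1), f j = f 0 + ∑ j ∈ Finset.Icc 1 n, f j := by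
  rw [Nat.range_succ_eq_Icc_zero, ← Finset.insert_Icc_add_one_left_eq_Icc (Nat.zero_le n),
    Finset.sum_insert (by simp), zero_add]

theorem neg_one_pow_sub_one_mul_pow {R : Type*} [Ring R] {j : ℕ} (hj : 1 ≤ j) (t : R) :
    (-1) ^ (j - 1) * t ^ j = -(-t) ^ j := by
  obtain ⟨j, rfl⟩ := Nat.exists_eq_add_of_le' hj
  rw [Nat.add_sub_cancel, neg_pow t, pow_succ (-1 : R) j, mul_neg_one, neg_mul, neg_neg]

theorem alternating_moment_sum_eq_general (i : ℕ) (k : ℕ) (t : ℝ) :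
    ∑ j ∈ Finset.Icc 1 i, (-1 : ℝ) ^ (j - 1) * (i.choose j : ℝ) * (j : ℝ) ^ k * t ^ j =
      (∑ j ∈ Finset.Icc 1 k, (stirlingSecond k j : ℝ) * t ^ j * (-1 : ℝ) ^ (j - 1) *
        (i.descFactorial j : ℝ) * (1 - t) ^ (i - j)) +
      (if k = 0 then 1 - (1 - t) ^ i else 0) := by
  have expansion := sum_choose_mul_pow_mul_pow i k (-t)
  rw [Finset.sum_range_succ_eq_add_sum_Icc_one, Finset.sum_range_succ_eq_add_sum_Icc_one,
    ← sub_eq_add_neg] at expansion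
  have lhs :
      ∑ j ∈ Finset.Icc 1 i, (-1 : ℝ) ^ (j - 1) * (i.choose j : ℝ) * (j : ℝ) ^ k * t ^ j =
      -∑ j ∈ Finset.Icc 1 i, (i.choose j * j ^ k : ℝ) * (-t) ^ j := by
    rw [← Finset.sum_neg_distrib]
    refine Finset.sum_congr rfl fun j hj => ?_
    linear_combination (i.choose j * j ^ k : ℝ) *
      neg_one_pow_sub_one_mul_pow (Finset.mem_Icc.1 hj).1 t
  have rhs : ∑ j ∈ Finset.Icc 1 k, (stirlingSecond k j : ℝ) * t ^ j * (-1 : ℝ) ^ (j - 1) *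
        (i.descFactorial j : ℝ) * (1 - t) ^ (i - j) =
      -∑ m ∈ Finset.Icc 1 k,
        (Nat.stirlingSecond k m * i.descFactorial m : ℝ) * (-t) ^ m * (1 - t) ^ (i - m) := by
    rw [← Finset.sum_neg_distrib, stirlingSecond_eq_nat_stirlingSecond]
    refine Finset.sum_congr rfl fun m hm => ?_
    linear_combination (Nat.stirlingSecond k m * i.descFactorial m * (1 - t) ^ (i - m) : ℝ) *
      neg_one_pow_sub_one_mul_pow (Finset.mem_Icc.1 hm).1 t
  rw [lhs, rhs]
  rcases k with _ | k <;> simp at expansion ⊢ <;> linarith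

theorem alternating_moment_sum_eq (i : ℕ) (hi : 1 ≤ i) (k : ℕ) (t : ℝ) :
    ∑ j ∈ Finset.Icc 1 i, (-1 : ℝ) ^ (j - 1) * (i.choose j : ℝ) * (j : ℝ) ^ k * t ^ j =
      (∑ j ∈ Finset.Icc 1 k, (stirlingSecond k j : ℝ) * t ^ j * (-1 : ℝ) ^ (j - 1) *
        (i.descFactorial j : ℝ) * (1 - t) ^ (i - j)) +
      (if k = 0 then 1 - (1 - t) ^ i else 0) :=
  alternating_moment_sum_eq_general i k t
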